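/- arXiv:2306.11475 — 3 statements merged into one kernel-verified Lean document; each statement's English description precedes it below -/
import Mathlib

section
/- (TV via survival function under MLR) Let P ≺ Q be distinct distributions on {0,…,m} satisfying monotone likelihood ratio, and let j* be the crossing point, the smallest j with Q_j ≥ P_j among indices j such that Q_{j'} < P_{j'} for all j' < j. Then TV(P,Q) = S_Q(j*−1) − S_P(j*−1), where S_P(j) = Σ_{j' > j} P_{j'} is the survival function. -/
/-- Total variation distance of discrete distributions on a finite set. -/
noncomputable def TV {Ω : Type*} [Fintype Ω] (P Q : Ω → ℝ) : ℝ :=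
  (1 / 2) * ∑ j, |P j - Q j|

/-- Survival probability at `j* - 1`: the probability mass at or above `j*`. -/
noncomputable def survivalFrom {m : ℕ} (P : Fin (m + 1) → ℝ) (jstar : Fin (m + 1)) : ℝ :=
  ∑ j ∈ Finset.univ.filter (fun j => jstar ≤ j), P j

theorem tv_eq_survival_diff_of_mlr {m : ℕ} (P Q : Fin (m + 1) → ℝ)
    (hP : ∀ j, 0 ≤ P j) (hQ : ∀ j, 0 ≤ Q j)
    (hPs : ∑ j, P j = 1) (hQs : ∑ j, Q j = 1)
    (hne : P ≠ Q)
    (hMLR : ∀ j j' : Fin (m + 1), j ≤ j' → Q j * P j' ≤ Q j' * P j)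
    (jstar : Fin (m + 1))
    (hcross_lt : ∀ j, j < jstar → Q j < P j)
    (hcross_ge : ∀ j, jstar ≤ j → P j ≤ Q j) :
    TV P Q = survivalFrom Q jstar - survivalFrom P jstar := by
  classical
  set A := Finset.univ.filter (fun j : Fin (m + 1) => jstar ≤ j) with hA
  have htot : ∑ j, (P j - Q j) = 0 := by
    rw [Finset.sum_sub_distrib, hPs, hQs]; ring
  have hsplit :
      (∑ j ∈ A, (P j - Q j)) +
        (∑ j ∈ Finset.univ.filter (fun j => ¬ jstar ≤ j), (P j - Q j)) = 0 := by
    rw [hA, Finset.sum_filter_add_sum_filter_not]; exact htot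
  have hB : (∑ j ∈ Finset.univ.filter (fun j => ¬ jstar ≤ j), (P j - Q j))
      = ∑ j ∈ A, (Q j - P j) := by
    have : ∑ j ∈ A, (Q j - P j) = - ∑ j ∈ A, (P j - Q j) := by
      rw [← Finset.sum_neg_distrib]; apply Finset.sum_congr rfl; intro j _; ring
    rw [this]; linarith
  have habs : ∑ j, |P j - Q j|
      = (∑ j ∈ A, (Q j - P j)) +
        (∑ j ∈ Finset.univ.filter (fun j => ¬ jstar ≤ j), (P j - Q j)) := by
    rw [← Finset.sum_filter_add_sum_filter_not Finset.univ (fun j => jstar ≤ j)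
      (fun j => |P j - Q j|)]
    congr 1
    · apply Finset.sum_congr rfl
      intro j hj
      have : jstar ≤ j := (Finset.mem_filter.mp hj).2
      rw [abs_of_nonpos (by linarith [hcross_ge j this])]
      ring
    · apply Finset.sum_congr rfl
      intro j hj
      have : ¬ jstar ≤ j := (Finset.mem_filter.mp hj).2
      have : Q j < P j := hcross_lt j (lt_of_not_ge this)
      rw [abs_of_nonneg (by linarith)]
  have hsum : ∑ j, |P j - Q j| = 2 * ∑ j ∈ A, (Q j - P j) := by
    rw [habs, hB]; ring
  have : ∑ j ∈ A, (Q j - P j) = survivalFrom Q jstar - survivalFrom P jstar := by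
    rw [survivalFrom, survivalFrom, ← Finset.sum_sub_distrib]
  rw [TV, hsum, ← this]; ring
end

section
/- (Two-outcome min-budget under MLRP) Consider a contract setting with two outcomes {0,1}, n actions with distributions f_i = (1 − p_i, p_i) where p₁ < p₂ < … < p_n (which implies MLRP), and costs c₁ < … < c_n. Then the contract paying t₁ = max_{i<n} (c_n − c_i)/(p_n − p_i) on outcome 1 and t₀ = 0 on outcome 0 satisfies all IC constraints for action n, and any nonnegative IC contract for action n must have budget max(t₀', t₁') ≥ max_{i<n} (c_n − c_i)/(p_n − p_i). -/
theorem two_outcome_min_budget_mlrp {N : ℕ}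
    (p : Fin (N + 2) → ℝ) (c : Fin (N + 2) → ℝ)
    (hp01 : ∀ i, 0 ≤ p i ∧ p i ≤ 1)
    (hp : StrictMono p) (hc : StrictMono c)
    (T : ℝ)
    (hT : IsGreatest {x : ℝ | ∃ i : Fin (N + 2), i < Fin.last (N + 1) ∧
      x = (c (Fin.last (N + 1)) - c i) / (p (Fin.last (N + 1)) - p i)} T) :
    (∀ i, i < Fin.last (N + 1) →
      p i * T + (1 - p i) * 0 - c i
        ≤ p (Fin.last (N + 1)) * T + (1 - p (Fin.last (N + 1))) * 0
            - c (Fin.last (N + 1)))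
    ∧ (∀ t₀ t₁ : ℝ, 0 ≤ t₀ → 0 ≤ t₁ →
        (∀ i, i < Fin.last (N + 1) →
          p i * t₁ + (1 - p i) * t₀ - c i
            ≤ p (Fin.last (N + 1)) * t₁ + (1 - p (Fin.last (N + 1))) * t₀
                - c (Fin.last (N + 1))) →
        T ≤ max t₀ t₁) := by
  obtain ⟨⟨j, hj, hjT⟩, hub⟩ := hT
  constructor
  · intro i hi
    have hpi : p i < p (Fin.last (N + 1)) := hp hi
    have hTi : (c (Fin.last (N + 1)) - c i) / (p (Fin.last (N + 1)) - p i) ≤ T :=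
      hub ⟨i, hi, rfl⟩
    have := (div_le_iff₀ (by linarith)).mp hTi
    nlinarith
  · intro t₀ t₁ h₀ h₁ hIC
    have hpj : p j < p (Fin.last (N + 1)) := hp hj
    have hICj := hIC j hj
    have : c (Fin.last (N + 1)) - c j ≤ (p (Fin.last (N + 1)) - p j) * (t₁ - t₀) := by
      nlinarith
    have hT1 : T ≤ t₁ - t₀ := by
      rw [hjT, div_le_iff₀ (by linarith)]
      linarith [this]
    calc T ≤ t₁ - t₀ := hT1
      _ ≤ t₁ := by linarith
      _ ≤ max t₀ t₁ := le_max_right _ _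
end

section
/- (Contract–test correspondence) Fix probability distributions f₁, f₂ on a finite set Ω with TV(f₂,f₁) > 0 and cost gap c = c₂ − c₁ > 0. A nonnegative contract t with budget B = max_j t_j satisfies the IC constraint Σ_j (f₂(j) − f₁(j))·t_j ≥ c if and only if the test ψ_j = t_j/B satisfies Σ_j f₁(j)·ψ_j + Σ_j f₂(j)·(1 − ψ_j) ≤ 1 − c/B. -/
theorem contract_test_correspondence {Ω : Type*} [Fintype Ω] [Nonempty Ω]
    (f₁ f₂ : Ω → ℝ)
    (hf₁ : ∀ j, 0 ≤ f₁ j) (hf₂ : ∀ j, 0 ≤ f₂ j)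
    (hs₁ : ∑ j, f₁ j = 1) (hs₂ : ∑ j, f₂ j = 1)
    (hTV : 0 < TV f₂ f₁)
    (c : ℝ) (hc : 0 < c) (B : ℝ) (hB : 0 < B)
    (t : Ω → ℝ) (ht : ∀ j, 0 ≤ t j ∧ t j ≤ B)
    (hBmax : Finset.univ.sup' Finset.univ_nonempty t = B) :
    (∑ j, (f₂ j - f₁ j) * t j ≥ c)
      ↔ (∑ j, f₁ j * (t j / B) + ∑ j, f₂ j * (1 - t j / B) ≤ 1 - c / B) := by
  have key : ∑ j, f₁ j * (t j / B) + ∑ j, f₂ j * (1 - t j / B)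
      = 1 - (∑ j, (f₂ j - f₁ j) * t j) / B := by
    rw [Finset.sum_div, ← Finset.sum_add_distrib]
    rw [show (1:ℝ) = ∑ j, f₂ j from hs₂.symm, ← Finset.sum_sub_distrib]
    apply Finset.sum_congr rfl
    intro j _
    rw [hs₂]
    field_simp
    ring
  rw [key]
  constructor
  · intro h
    have : c / B ≤ (∑ j, (f₂ j - f₁ j) * t j) / B :=
      div_le_div_of_nonneg_right h hB.le
    linarith
  · intro h
    have h2 : c / B ≤ (∑ j, (f₂ j - f₁ j) * t j) / B := by linarith
    have := (div_le_div_iff_of_pos_right hB).mp h2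
    linarith
end
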